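/- Let G be a non-trivial connected graph. If rc(G) = 2 then trc(G) = 3; moreover, if trc(G) ∈ {3, 4} then diam(G) = 2. -/
import Mathlib


/- Definitions of the six rainbow connection parameters.

A colouring with (at most) `k` colours uses colours from `{0, ..., k-1}`.
Following the usual convention in the literature, only the colours appearing
on the edges / internal vertices of the witnessing paths are required to lie
in the palette; this yields e.g. `rvc(G) = 0` for complete graphs `G`. -/

namespace RainbowConn

variable {V : Type*}

/-- The internal vertices of a walk. -/
def internals {G : SimpleGraph V} {u v : V} (p : G.Walk u v) : List V :=
  p.support.tail.dropLast

/-- The rainbow connection number `rc G`: the minimum number of colours in an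
edge-colouring of `G` such that any two vertices are connected by a rainbow path. -/
noncomputable def rc (G : SimpleGraph V) : ℕ :=
  sInf {k | ∃ c : Sym2 V → ℕ, ∀ u v : V, ∃ p : G.Walk u v, p.IsPath ∧
    (p.edges.map c).Nodup ∧ ∀ e ∈ p.edges, c e < k}

/-- The strong rainbow connection number `src G`: the minimum number of colours in an
edge-colouring of `G` such that any two vertices are connected by a rainbow geodesic. -/
noncomputable def src (G : SimpleGraph V) : ℕ :=
  sInf {k | ∃ c : Sym2 V → ℕ, ∀ u v : V, ∃ p : G.Walk u v, p.IsPath ∧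
    p.length = G.dist u v ∧ (p.edges.map c).Nodup ∧ ∀ e ∈ p.edges, c e < k}

/-- The rainbow vertex-connection number `rvc G`: the minimum number of colours in a
vertex-colouring of `G` such that any two vertices are connected by a vertex-rainbow path. -/
noncomputable def rvc (G : SimpleGraph V) : ℕ :=
  sInf {k | ∃ c : V → ℕ, ∀ u v : V, ∃ p : G.Walk u v, p.IsPath ∧
    ((internals p).map c).Nodup ∧ ∀ x ∈ internals p, c x < k}

/-- The strong rainbow vertex-connection number `srvc G`: the minimum number of colours in a
vertex-colouring of `G` such that any two vertices are connected by a vertex-rainbow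
geodesic. -/
noncomputable def srvc (G : SimpleGraph V) : ℕ :=
  sInf {k | ∃ c : V → ℕ, ∀ u v : V, ∃ p : G.Walk u v, p.IsPath ∧
    p.length = G.dist u v ∧ ((internals p).map c).Nodup ∧ ∀ x ∈ internals p, c x < k}

/-- The total rainbow connection number `trc G`: the minimum number of colours in a
total-colouring of `G` such that any two vertices are connected by a total-rainbow path. -/
noncomputable def trc (G : SimpleGraph V) : ℕ :=
  sInf {k | ∃ (cE : Sym2 V → ℕ) (cV : V → ℕ), ∀ u v : V, ∃ p : G.Walk u v, p.IsPath ∧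
    (p.edges.map cE ++ (internals p).map cV).Nodup ∧
    (∀ e ∈ p.edges, cE e < k) ∧ ∀ x ∈ internals p, cV x < k}

/-- The strong total rainbow connection number `strc G`: the minimum number of colours in a
total-colouring of `G` such that any two vertices are connected by a total-rainbow
geodesic. -/
noncomputable def strc (G : SimpleGraph V) : ℕ :=
  sInf {k | ∃ (cE : Sym2 V → ℕ) (cV : V → ℕ), ∀ u v : V, ∃ p : G.Walk u v, p.IsPath ∧
    p.length = G.dist u v ∧ (p.edges.map cE ++ (internals p).map cV).Nodup ∧
    (∀ e ∈ p.edges, cE e < k) ∧ ∀ x ∈ internals p, cV x < k}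



private lemma length_le_of_nodup_of_lt {l : List ℕ} {k : ℕ} (h : l.Nodup)
    (hk : ∀ x ∈ l, x < k) : l.length ≤ k := by
  have h1 : l.toFinset ⊆ Finset.range k := by
    intro x hx
    simp only [List.mem_toFinset] at hx
    exact Finset.mem_range.mpr (hk x hx)
  have h2 := Finset.card_le_card h1
  rwa [List.toFinset_card_of_nodup h, Finset.card_range] at h2

private lemma nodup_of_length_le_one {α : Type*} {l : List α} (h : l.length ≤ 1) :
    l.Nodup := by
  match l with
  | [] => simp
  | [a] => simp
  | a :: b :: t => simp at h

lemma internals_length {G : SimpleGraph V} {u v : V} (p : G.Walk u v) :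
    (internals p).length = p.length - 1 := by
  simp [internals, SimpleGraph.Walk.length_support]

open SimpleGraph

/-- For two distinct non-adjacent vertices in a connected graph, the distance is at least 2. -/
private lemma two_le_dist {G : SimpleGraph V} (hconn : G.Connected) {u v : V}
    (hne : u ≠ v) (hadj : ¬ G.Adj u v) : 2 ≤ G.dist u v := by
  have h0 : 0 < G.dist u v := hconn.pos_dist_of_ne hne
  have h1 : G.dist u v ≠ 1 := fun h => hadj (SimpleGraph.dist_eq_one_iff_adj.mp h)
  omega



/-- For a non-trivial connected graph `G`: if `rc(G) = 2` then `trc(G) = 3`; moreover,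
if `trc(G) ∈ {3, 4}` then `diam(G) = 2`. -/
theorem rc_two_implies_trc_three_and_trc_small_implies_diam_two {V : Type*} [Fintype V]
    (G : SimpleGraph V) (hconn : G.Connected) (hV : 2 ≤ Fintype.card V) :
    (rc G = 2 → trc G = 3) ∧ ((trc G = 3 ∨ trc G = 4) → G.diam = 2) := by
  classical
  have hne : Nonempty V := Fintype.card_pos_iff.mp (by omega)
  -- the defining sets
  set TS : Set ℕ := {k | ∃ (cE : Sym2 V → ℕ) (cV : V → ℕ), ∀ u v : V, ∃ p : G.Walk u v,
    p.IsPath ∧ (p.edges.map cE ++ (internals p).map cV).Nodup ∧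
    (∀ e ∈ p.edges, cE e < k) ∧ ∀ x ∈ internals p, cV x < k} with hTS
  have htrc : trc G = sInf TS := rfl
  -- if G is complete then 1 ∈ TS
  have hcompl : (∀ u v : V, u ≠ v → G.Adj u v) → (1 : ℕ) ∈ TS := by
    intro hc
    refine ⟨fun _ => 0, fun _ => 0, fun u v => ?_⟩
    by_cases h : u = v
    · subst h
      exact ⟨SimpleGraph.Walk.nil, by simp [internals]⟩
    · refine ⟨SimpleGraph.Walk.cons (hc u v h) SimpleGraph.Walk.nil, ?_⟩
      constructor
      · simp [SimpleGraph.Walk.isPath_def, h]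
      · simp [internals]
  -- any k ∈ TS is at least 3, provided a nonadjacent pair exists
  have hlb : ∀ (u v : V), u ≠ v → ¬ G.Adj u v → ∀ k ∈ TS, 3 ≤ k := by
    intro u v huv hadj k hk
    obtain ⟨cE, cV, h⟩ := hk
    obtain ⟨p, hp, hnd, hbe, hbv⟩ := h u v
    have hd : 2 ≤ p.length := le_trans (two_le_dist hconn huv hadj) (SimpleGraph.dist_le p)
    have hlen : (p.edges.map cE ++ (internals p).map cV).length ≤ k := by
      refine length_le_of_nodup_of_lt hnd ?_
      intro x hx
      rcases List.mem_append.mp hx with hx | hx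
      · obtain ⟨e, he, rfl⟩ := List.mem_map.mp hx
        exact hbe e he
      · obtain ⟨y, hy, rfl⟩ := List.mem_map.mp hx
        exact hbv y hy
    rw [List.length_append, List.length_map, List.length_map,
      SimpleGraph.Walk.length_edges, internals_length] at hlen
    omega
  constructor
  · -- rc G = 2 → trc G = 3
    intro hrc
    -- there is a nonadjacent pair
    have hnadj : ∃ u v : V, u ≠ v ∧ ¬ G.Adj u v := by
      by_contra hcon
      push_neg at hcon
      have h1 : (1 : ℕ) ∈ {k | ∃ c : Sym2 V → ℕ, ∀ u v : V, ∃ p : G.Walk u v, p.IsPath ∧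
          (p.edges.map c).Nodup ∧ ∀ e ∈ p.edges, c e < k} := by
        refine ⟨fun _ => 0, fun u v => ?_⟩
        by_cases h : u = v
        · subst h; exact ⟨SimpleGraph.Walk.nil, by simp⟩
        · refine ⟨SimpleGraph.Walk.cons (hcon u v h) SimpleGraph.Walk.nil, ?_⟩
          constructor
          · simp [SimpleGraph.Walk.isPath_def, h]
          · simp
      have := Nat.sInf_le h1
      rw [show sInf _ = rc G from rfl] at this
      omega
    obtain ⟨u₀, v₀, hne₀, hadj₀⟩ := hnadj
    -- extract the witness colouring for rc G = 2
    have hRne : {k | ∃ c : Sym2 V → ℕ, ∀ u v : V, ∃ p : G.Walk u v, p.IsPath ∧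
        (p.edges.map c).Nodup ∧ ∀ e ∈ p.edges, c e < k}.Nonempty := by
      by_contra hcon
      rw [Set.not_nonempty_iff_eq_empty] at hcon
      have : rc G = 0 := by rw [rc, hcon]; simp
      omega
    have hmem := Nat.sInf_mem hRne
    rw [show sInf _ = rc G from rfl, hrc] at hmem
    obtain ⟨c, hc⟩ := hmem
    -- build the total colouring: edges get c, vertices get colour 2
    have h3 : (3 : ℕ) ∈ TS := by
      refine ⟨c, fun _ => 2, fun u v => ?_⟩
      obtain ⟨p, hp, hnd, hlt⟩ := hc u v
      have hl2 : p.length ≤ 2 := by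
        have := length_le_of_nodup_of_lt hnd (by
          intro x hx
          obtain ⟨e, he, rfl⟩ := List.mem_map.mp hx
          exact hlt e he)
        rwa [List.length_map, SimpleGraph.Walk.length_edges] at this
      have hint1 : (internals p).length ≤ 1 := by rw [internals_length]; omega
      refine ⟨p, hp, ?_, fun e he => lt_trans (hlt e he) (by omega), fun x _ => by norm_num⟩
      refine List.Nodup.append hnd (nodup_of_length_le_one (by simpa using hint1)) ?_
      intro a ha hb
      obtain ⟨e, he, rfl⟩ := List.mem_map.mp ha
      obtain ⟨y, hy, h2⟩ := List.mem_map.mp hb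
      have := hlt e he
      have h3 : 2 = c e := h2
      omega
    refine le_antisymm ?_ ?_
    · exact Nat.sInf_le h3
    · exact hlb u₀ v₀ hne₀ hadj₀ _ (Nat.sInf_mem ⟨3, h3⟩)
  · -- trc G ∈ {3,4} → diam G = 2
    intro htrc34
    have h34 : 3 ≤ trc G ∧ trc G ≤ 4 := by rcases htrc34 with h | h <;> omega
    -- TS is nonempty, so trc G ∈ TS
    have hTne : TS.Nonempty := by
      by_contra hcon
      rw [Set.not_nonempty_iff_eq_empty] at hcon
      have : trc G = 0 := by rw [htrc, hcon]; simp
      omega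
    have hmem : trc G ∈ TS := htrc ▸ Nat.sInf_mem hTne
    obtain ⟨cE, cV, hwit⟩ := hmem
    -- a nonadjacent pair exists (else trc G ≤ 1)
    have hnadj : ∃ u v : V, u ≠ v ∧ ¬ G.Adj u v := by
      by_contra hcon
      push_neg at hcon
      have := Nat.sInf_le (hcompl hcon)
      rw [← htrc] at this
      omega
    obtain ⟨u₀, v₀, hne₀, hadj₀⟩ := hnadj
    -- all distances are at most 2
    have hdist : ∀ u v : V, G.dist u v ≤ 2 ∧ G.edist u v ≤ 2 := by
      intro u v
      obtain ⟨p, hp, hnd, hbe, hbv⟩ := hwit u v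
      have hlen : (p.edges.map cE ++ (internals p).map cV).length ≤ trc G := by
        refine length_le_of_nodup_of_lt hnd ?_
        intro x hx
        rcases List.mem_append.mp hx with hx | hx
        · obtain ⟨e, he, rfl⟩ := List.mem_map.mp hx
          exact hbe e he
        · obtain ⟨y, hy, rfl⟩ := List.mem_map.mp hx
          exact hbv y hy
      rw [List.length_append, List.length_map, List.length_map,
        SimpleGraph.Walk.length_edges, internals_length] at hlen
      have hl2 : p.length ≤ 2 := by omega
      constructor
      · exact le_trans (SimpleGraph.dist_le p) hl2
      · calc G.edist u v ≤ p.length := SimpleGraph.edist_le p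
          _ ≤ 2 := by exact_mod_cast hl2
    have hediam : G.ediam ≤ 2 := SimpleGraph.ediam_le_of_edist_le fun u v => (hdist u v).2
    have hediam_ne : G.ediam ≠ ⊤ := by
      intro h
      rw [h] at hediam
      simp at hediam
    refine le_antisymm ?_ ?_
    · obtain ⟨u, v, huv⟩ := SimpleGraph.exists_dist_eq_diam (G := G)
      rw [← huv]
      exact (hdist u v).1
    · exact le_trans (two_le_dist hconn hne₀ hadj₀) (SimpleGraph.dist_le_diam hediam_ne)


end RainbowConn
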